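/- arXiv:math/9907098 — 4 statements merged into one kernel-verified Lean document; each statement's English description precedes it below -/
import Mathlib

section
/- Let f : (V,F) → (W,G) be a morphism of filtered vector spaces over k (i.e. a k-linear map with f(F^x) ⊆ G^x for all x ∈ ℝ) whose underlying linear map f : V → W is an isomorphism of k-vector spaces. Then deg(V,F) ≤ deg(W,G). -/
open Submodule Module

/-- An ℝ-filtration on a `k`-vector space `V`: an antitone family of subspaces which is
exhaustive, separated, and left-continuous. -/
structure RFiltration (k V : Type*) [Field k] [AddCommGroup V] [Module k V] where
  filt : ℝ → Submodule k V
  antitone' : Antitone filt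
  eventually_top : ∃ a : ℝ, ∀ x : ℝ, x ≤ a → filt x = ⊤
  eventually_bot : ∃ b : ℝ, ∀ x : ℝ, b ≤ x → filt x = ⊥
  left_cont : ∀ x : ℝ, filt x = ⨅ y : {y : ℝ // y < x}, filt y.1

namespace RFiltration

variable {k V W : Type*} [Field k] [AddCommGroup V] [Module k V]
  [AddCommGroup W] [Module k W]

/-- `F^{x+} = ⋃_{y > x} F^y`. -/
noncomputable def plus (F : RFiltration k V) (x : ℝ) : Submodule k V :=
  ⨆ y : {y : ℝ // x < y}, F.filt y.1

/-- `dim gr^x(V) = dim (F^x / F^{x+})`. -/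
noncomputable def grDim (F : RFiltration k V) (x : ℝ) : ℕ :=
  Module.finrank k (↥(F.filt x) ⧸ (F.plus x).comap (F.filt x).subtype)

/-- The degree `deg(V,F) = ∑_x x · dim gr^x(V)`. -/
noncomputable def deg (F : RFiltration k V) : ℝ :=
  ∑ᶠ x : ℝ, x * (F.grDim x : ℝ)

end RFiltration

set_option linter.unusedSectionVars false

namespace RFiltration

variable {k V : Type*} [Field k] [AddCommGroup V] [Module k V] [FiniteDimensional k V]

/-- The supremum of the set where the filtration has rank at least `c`. -/
noncomputable def jumpSup (F : RFiltration k V) (c : ℕ) : ℝ :=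
  sSup {x : ℝ | c ≤ finrank k (F.filt x)}

variable (F : RFiltration k V)

lemma plus_le (x : ℝ) : F.plus x ≤ F.filt x :=
  iSup_le fun y => F.antitone' (le_of_lt y.2)

lemma exists_filt_eq_of_lt (x : ℝ) : ∃ y < x, F.filt x = F.filt y := by
  obtain ⟨y₀, hy₀x, hmin⟩ : ∃ y₀ < x, ∀ y < x,
      finrank k (F.filt y₀) ≤ finrank k (F.filt y) := by
    have hne : ((fun y => finrank k (F.filt y)) '' Set.Iio x).Nonempty :=
      ⟨_, ⟨x - 1, by simp only [Set.mem_Iio]; linarith, rfl⟩⟩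
    obtain ⟨y₀, hy₀, heq⟩ := Nat.sInf_mem hne
    refine ⟨y₀, hy₀, fun y hy => ?_⟩
    have h2 : sInf ((fun y => finrank k (F.filt y)) '' Set.Iio x) ≤ finrank k (F.filt y) :=
      Nat.sInf_le ⟨y, hy, rfl⟩
    rw [← heq] at h2
    exact h2
  refine ⟨y₀, hy₀x, ?_⟩
  have hle : ∀ y : {y : ℝ // y < x}, F.filt y₀ ≤ F.filt y.1 := by
    intro ⟨y, hy⟩
    rcases le_total y y₀ with h | h
    · exact F.antitone' h
    · exact le_of_eq (Submodule.eq_of_le_of_finrank_le (F.antitone' h) (hmin y hy)).symm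
  rw [F.left_cont x]
  exact le_antisymm (iInf_le (fun y : {y : ℝ // y < x} => F.filt y.1) ⟨y₀, hy₀x⟩) (le_iInf hle)

lemma exists_plus_eq (x : ℝ) : ∃ y > x, F.plus x = F.filt y := by
  obtain ⟨y₀, hy₀x, hmax⟩ : ∃ y₀ > x, ∀ y > x,
      finrank k (F.filt y) ≤ finrank k (F.filt y₀) := by
    have hne : ((fun y => finrank k (F.filt y)) '' Set.Ioi x).Nonempty :=
      ⟨_, ⟨x + 1, by simp only [Set.mem_Ioi]; linarith, rfl⟩⟩
    have hbdd : BddAbove ((fun y => finrank k (F.filt y)) '' Set.Ioi x) :=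
      ⟨finrank k V, by rintro _ ⟨y, _, rfl⟩; exact Submodule.finrank_le _⟩
    obtain ⟨y₀, hy₀, heq⟩ := Nat.sSup_mem hne hbdd
    refine ⟨y₀, hy₀, fun y hy => ?_⟩
    have h2 : finrank k (F.filt y) ≤ sSup ((fun y => finrank k (F.filt y)) '' Set.Ioi x) :=
      le_csSup hbdd ⟨y, hy, rfl⟩
    rw [← heq] at h2
    exact h2
  refine ⟨y₀, hy₀x, ?_⟩
  have hle : ∀ y : {y : ℝ // x < y}, F.filt y.1 ≤ F.filt y₀ := by
    intro ⟨y, hy⟩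
    show F.filt y ≤ F.filt y₀
    rcases le_total y y₀ with h | h
    · exact le_of_eq (Submodule.eq_of_le_of_finrank_le (F.antitone' h) (hmax y hy)).symm
    · exact F.antitone' h
  exact le_antisymm (iSup_le hle) (le_iSup (fun y : {y : ℝ // x < y} => F.filt y.1) ⟨y₀, hy₀x⟩)

lemma grDim_eq (x : ℝ) :
    F.grDim x = finrank k (F.filt x) - finrank k (F.plus x) := by
  have h1 := Submodule.finrank_quotient_add_finrank ((F.plus x).comap (F.filt x).subtype)
  have h2 : finrank k ((F.plus x).comap (F.filt x).subtype) = finrank k (F.plus x) :=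
    (Submodule.comapSubtypeEquivOfLe (F.plus_le x)).finrank_eq
  rw [h2] at h1
  simp only [grDim]
  omega

lemma setS_nonempty {c : ℕ} (hcn : c ≤ finrank k V) :
    {x : ℝ | c ≤ finrank k (F.filt x)}.Nonempty := by
  obtain ⟨a, ha⟩ := F.eventually_top
  refine ⟨a, ?_⟩
  rw [Set.mem_setOf_eq, ha a le_rfl, finrank_top]
  exact hcn

lemma setS_bddAbove {c : ℕ} (hc : 1 ≤ c) :
    BddAbove {x : ℝ | c ≤ finrank k (F.filt x)} := by
  obtain ⟨b, hb⟩ := F.eventually_bot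
  refine ⟨b, fun x hx => ?_⟩
  by_contra h
  push_neg at h
  have hbot := hb x h.le
  have hx' : c ≤ finrank k (F.filt x) := hx
  have h0 : finrank k (F.filt x) = 0 := by rw [hbot]; exact finrank_bot k V
  omega

lemma le_jumpSup_iff {c : ℕ} (hc : 1 ≤ c) (hcn : c ≤ finrank k V) (x : ℝ) :
    x ≤ F.jumpSup c ↔ c ≤ finrank k (F.filt x) := by
  constructor
  · intro hx
    obtain ⟨y₀, hy₀x, heq⟩ := F.exists_filt_eq_of_lt x
    have hlt : y₀ < F.jumpSup c := lt_of_lt_of_le hy₀x hx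
    obtain ⟨z, hz, hyz⟩ := exists_lt_of_lt_csSup (F.setS_nonempty hcn) hlt
    rw [heq]
    exact le_trans hz (Submodule.finrank_mono (F.antitone' hyz.le))
  · intro hx
    exact le_csSup (F.setS_bddAbove hc) hx

lemma lt_jumpSup_iff {c : ℕ} (hc : 1 ≤ c) (hcn : c ≤ finrank k V) (x : ℝ) :
    x < F.jumpSup c ↔ c ≤ finrank k (F.plus x) := by
  constructor
  · intro hx
    obtain ⟨z, hz, hxz⟩ := exists_lt_of_lt_csSup (F.setS_nonempty hcn) hx
    have : F.filt z ≤ F.plus x := le_iSup (fun y : {y : ℝ // x < y} => F.filt y.1) ⟨z, hxz⟩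
    exact le_trans hz (Submodule.finrank_mono this)
  · intro hx
    obtain ⟨y, hy, heq⟩ := F.exists_plus_eq x
    rw [heq] at hx
    exact lt_of_lt_of_le hy (le_csSup (F.setS_bddAbove hc) hx)

lemma jumpSup_eq_iff {c : ℕ} (hc : 1 ≤ c) (hcn : c ≤ finrank k V) (x : ℝ) :
    F.jumpSup c = x ↔
      finrank k (F.plus x) < c ∧ c ≤ finrank k (F.filt x) := by
  constructor
  · rintro rfl
    refine ⟨?_, (F.le_jumpSup_iff hc hcn _).mp le_rfl⟩
    by_contra h
    push_neg at h
    exact absurd ((F.lt_jumpSup_iff hc hcn _).mpr h) (lt_irrefl _)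
  · rintro ⟨h1, h2⟩
    have ha := (F.le_jumpSup_iff hc hcn x).mpr h2
    have hb : ¬ x < F.jumpSup c := fun hlt =>
      absurd ((F.lt_jumpSup_iff hc hcn x).mp hlt) (by omega)
    exact le_antisymm (not_lt.mp hb) ha

lemma deg_eq_sum_jumpSup : F.deg = ∑ c ∈ Finset.Icc 1 (finrank k V), F.jumpSup c := by
  classical
  set n := finrank k V
  set s : Finset ℝ := (Finset.Icc 1 n).image F.jumpSup with hs
  have hsupp : Function.support (fun x => x * (F.grDim x : ℝ)) ⊆ ↑s := by
    intro x hx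
    have hgr : F.grDim x ≠ 0 := by
      intro h
      simp [Function.mem_support, h] at hx
    rw [F.grDim_eq] at hgr
    have hlt : finrank k (F.plus x) < finrank k (F.filt x) := by omega
    set c := finrank k (F.plus x) + 1 with hc
    have hc1 : 1 ≤ c := by omega
    have hcd : c ≤ finrank k (F.filt x) := by omega
    have hcn : c ≤ n := le_trans hcd (Submodule.finrank_le _)
    have : F.jumpSup c = x := by
      rw [F.jumpSup_eq_iff hc1 hcn]
      exact ⟨by omega, hcd⟩
    exact Finset.mem_coe.mpr (Finset.mem_image.mpr ⟨c, Finset.mem_Icc.mpr ⟨hc1, hcn⟩, this⟩)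
  rw [deg, finsum_eq_finset_sum_of_support_subset _ hsupp]
  rw [show (∑ c ∈ Finset.Icc 1 n, F.jumpSup c) = ∑ c ∈ Finset.Icc 1 n, id (F.jumpSup c) from rfl]
  rw [Finset.sum_comp (id : ℝ → ℝ) F.jumpSup]
  rw [← hs]
  refine Finset.sum_congr rfl fun x hx => ?_
  have hcard : (Finset.filter (fun c => F.jumpSup c = x) (Finset.Icc 1 n)).card = F.grDim x := by
    have hfilt : Finset.filter (fun c => F.jumpSup c = x) (Finset.Icc 1 n)
        = Finset.Ioc (finrank k (F.plus x)) (finrank k (F.filt x)) := by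
      ext c
      simp only [Finset.mem_filter, Finset.mem_Icc, Finset.mem_Ioc]
      constructor
      · rintro ⟨⟨h1, h2⟩, h3⟩
        exact (F.jumpSup_eq_iff h1 h2 x).mp h3
      · rintro ⟨h1, h2⟩
        have hc1 : 1 ≤ c := by omega
        have hcn : c ≤ n := le_trans h2 (Submodule.finrank_le _)
        exact ⟨⟨hc1, hcn⟩, (F.jumpSup_eq_iff hc1 hcn x).mpr ⟨h1, h2⟩⟩
    rw [hfilt, Nat.card_Ioc, F.grDim_eq]
  rw [hcard, nsmul_eq_mul, id, mul_comm]

end RFiltration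


/-- A morphism of filtered vector spaces whose underlying linear map is an
isomorphism does not decrease the degree. -/
theorem degree_le_of_filtered_morphism_bijective
    {k V W : Type*} [Field k] [AddCommGroup V] [Module k V] [AddCommGroup W] [Module k W]
    [FiniteDimensional k V] [FiniteDimensional k W]
    (F : RFiltration k V) (G : RFiltration k W) (f : V →ₗ[k] W)
    (hbij : Function.Bijective f)
    (hmor : ∀ x : ℝ, (F.filt x).map f ≤ G.filt x) :
    F.deg ≤ G.deg := by
  have e : V ≃ₗ[k] W := LinearEquiv.ofBijective f hbij
  have hrank : finrank k W = finrank k V := e.finrank_eq.symm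
  rw [F.deg_eq_sum_jumpSup, G.deg_eq_sum_jumpSup, hrank]
  refine Finset.sum_le_sum fun c hc => ?_
  obtain ⟨hc1, hcn⟩ := Finset.mem_Icc.mp hc
  refine csSup_le_csSup (G.setS_bddAbove hc1) (F.setS_nonempty hcn) ?_
  intro x hx
  have h1 : finrank k (F.filt x) = finrank k ((F.filt x).map f) :=
    (Submodule.equivMapOfInjective f hbij.1 (F.filt x)).finrank_eq
  have h2 : finrank k ((F.filt x).map f) ≤ finrank k (G.filt x) :=
    Submodule.finrank_mono (hmor x)
  have hx' : c ≤ finrank k (F.filt x) := hx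
  show c ≤ finrank k (G.filt x)
  omega
end

section
/- Every short exact sequence 0 → (V',F') →^i (V,F) →^p (V'',F'') → 0 of filtered vector spaces over k splits in the filtered sense: there exists a k-linear section s : V'' → V of p such that s(F''^x) ⊆ F^x for all x ∈ ℝ and, for every x ∈ ℝ, F^x = i(F'^x) ⊕ s(F''^x). In particular (V,F) is isomorphic to (V',F') ⊕ (V'',F'') as a filtered vector space, where the direct sum carries the filtration (V'⊕V'')^x = F'^x ⊕ F''^x. -/
open Submodule Module

section Aux

variable {k V V'' : Type*} [Field k]
  [AddCommGroup V] [Module k V] [AddCommGroup V''] [Module k V'']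
  [FiniteDimensional k V'']

/-- The infimum of an antitone family over `{y // y < x}` is attained. -/
lemma rfilt_inf_attained (C : ℝ → Submodule k V'') (hC : Antitone C) (x : ℝ) :
    ∃ y : ℝ, y < x ∧ (⨅ z : {z : ℝ // z < x}, C z.1) = C y := by
  have hne : {n : ℕ | ∃ y : ℝ, y < x ∧ finrank k (C y) = n}.Nonempty :=
    ⟨finrank k (C (x - 1)), x - 1, by linarith, rfl⟩
  obtain ⟨y, hy, hyr⟩ := Nat.sInf_mem hne
  refine ⟨y, hy, le_antisymm (iInf_le _ (⟨y, hy⟩ : {z : ℝ // z < x})) (le_iInf fun z => ?_)⟩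
  rcases le_total z.1 y with h | h
  · exact hC h
  · have h1 : C z.1 ≤ C y := hC h
    have h2 : finrank k (C y) ≤ finrank k (C z.1) := by
      rw [hyr]; exact Nat.sInf_le ⟨z.1, z.2, rfl⟩
    exact le_of_eq (Submodule.eq_of_le_of_finrank_le h1 h2).symm

/-- Key lemma: a filtered section exists, by induction on a dimension bound. -/
lemma rfilt_key (p : V →ₗ[k] V'') (hp : Function.Surjective p)
    (F : ℝ → Submodule k V) (hF : Antitone F) :
    ∀ n : ℕ, ∀ C : ℝ → Submodule k V'', Antitone C →
      (∃ b : ℝ, ∀ x : ℝ, b ≤ x → C x = ⊥) →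
      (∀ x : ℝ, C x = ⨅ y : {y : ℝ // y < x}, C y.1) →
      (∀ x : ℝ, C x ≤ (F x).map p) →
      (∀ x : ℝ, finrank k (C x) ≤ n) →
      ∃ s : V'' →ₗ[k] V, p.comp s = LinearMap.id ∧ ∀ x : ℝ, (C x).map s ≤ F x := by
  intro n
  induction n with
  | zero =>
    intro C hC hbot hlc hle hrk
    obtain ⟨g, hg⟩ := p.exists_rightInverse_of_surjective (LinearMap.range_eq_top.2 hp)
    refine ⟨g, hg, fun x => ?_⟩
    have : C x = ⊥ := Submodule.finrank_eq_zero.mp (Nat.le_zero.mp (hrk x))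
    simp [this]
  | succ n ih =>
    intro C hC hbot hlc hle hrk
    by_cases htriv : ∀ x : ℝ, C x = ⊥
    · obtain ⟨g, hg⟩ := p.exists_rightInverse_of_surjective (LinearMap.range_eq_top.2 hp)
      refine ⟨g, hg, fun x => by simp [htriv x]⟩
    push_neg at htriv
    set T : Set ℝ := {x | C x ≠ ⊥} with hT
    have hTne : T.Nonempty := htriv
    obtain ⟨b, hb⟩ := hbot
    have hTbdd : BddAbove T := ⟨b, fun x hx => by
      by_contra hxb; exact hx (hb x (le_of_lt (not_le.mp hxb)))⟩
    set x₀ : ℝ := sSup T with hx₀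
    have hle_x₀ : ∀ x : ℝ, C x ≠ ⊥ → x ≤ x₀ := fun x hx => le_csSup hTbdd hx
    have hCx₀ : C x₀ ≠ ⊥ := by
      obtain ⟨y, hy, hyeq⟩ := rfilt_inf_attained C hC x₀
      rw [hlc x₀, hyeq]
      obtain ⟨z, hzT, hyz⟩ := exists_lt_of_lt_csSup hTne hy
      intro hCy
      exact hzT (le_bot_iff.mp (hCy ▸ hC hyz.le))
    obtain ⟨e, heC, hene⟩ := (Submodule.ne_bot_iff _).mp hCx₀
    -- a linear functional with l e = 1
    obtain ⟨l, hl⟩ := (LinearMap.toSpanSingleton k V'' e).exists_leftInverse_of_injective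
      (LinearMap.ker_toSpanSingleton k hene)
    have hle1 : l e = 1 := by
      have := LinearMap.congr_fun hl 1
      simpa [LinearMap.toSpanSingleton] using this
    -- a lift of e
    obtain ⟨v, hvF, hvp⟩ := hle x₀ heC
    -- the smaller filtration
    set C' : ℝ → Submodule k V'' := fun x => C x ⊓ LinearMap.ker l with hC'
    have heCx : ∀ x : ℝ, C x ≠ ⊥ → e ∈ C x := fun x hx => hC (hle_x₀ x hx) heC
    have hrk' : ∀ x : ℝ, finrank k (C' x) ≤ n := by
      intro x
      by_cases hx : C x = ⊥
      · have h0 : C' x = ⊥ := le_bot_iff.mp (hx ▸ inf_le_left)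
        rw [h0, finrank_bot]
        exact Nat.zero_le n
      · have hlt : C' x < C x := lt_of_le_of_ne inf_le_left (fun h => by
          have : e ∈ C' x := h ▸ heCx x hx
          have : l e = 0 := this.2
          rw [hle1] at this; exact one_ne_zero this)
        have h1 := Submodule.finrank_lt_finrank_of_lt hlt
        have h2 := hrk x
        omega
    obtain ⟨s', hs', hs'filt⟩ := ih C' (fun a b hab => inf_le_inf (hC hab) le_rfl)
      ⟨b, fun x hx => le_bot_iff.mp ((hb x hx) ▸ inf_le_left)⟩
      (fun x => by
        haveI : Nonempty {y : ℝ // y < x} := ⟨⟨x - 1, by linarith⟩⟩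
        show C x ⊓ LinearMap.ker l = _
        conv_lhs => rw [hlc x]
        exact iInf_inf)
      (fun x => inf_le_left.trans (hle x))
      hrk'
    refine ⟨s' + l.smulRight (v - s' e), ?_, ?_⟩
    · ext w
      have h1 := LinearMap.congr_fun hs' w
      have h2 := LinearMap.congr_fun hs' e
      simp only [LinearMap.comp_apply, LinearMap.id_apply] at h1 h2 ⊢
      simp [LinearMap.smulRight_apply, map_add, map_sub, map_smul, h1, h2, hvp]
    · intro x u hu
      obtain ⟨w, hwC, rfl⟩ := hu
      by_cases hx : C x = ⊥
      · have : w = 0 := by rw [hx] at hwC; simpa using hwC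
        simp [this]
      · have hxx₀ : x ≤ x₀ := hle_x₀ x hx
        have hex : e ∈ C x := heCx x hx
        have hwe : w - l w • e ∈ C' x := by
          refine ⟨sub_mem hwC (Submodule.smul_mem _ _ hex), ?_⟩
          simp [LinearMap.mem_ker, map_sub, map_smul, hle1]
        have h1 : s' (w - l w • e) ∈ F x := hs'filt x ⟨_, hwe, rfl⟩
        have h2 : l w • v ∈ F x := Submodule.smul_mem _ _ (hF hxx₀ hvF)
        have heq : (s' + l.smulRight (v - s' e)) w = s' (w - l w • e) + l w • v := by
          simp only [LinearMap.add_apply, LinearMap.smulRight_apply, map_sub, map_smul,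
            smul_sub]
          abel
        rw [heq]
        exact Submodule.add_mem _ h1 h2

end Aux
/-- Every short exact sequence of filtered vector spaces splits in the
filtered sense: there is a linear section `s` of `p` compatible with the filtrations such
that `F^x = i(F'^x) ⊕ s(F''^x)` for every `x`. -/
theorem filtered_short_exact_sequence_splits
    {k V' V V'' : Type*} [Field k]
    [AddCommGroup V'] [Module k V'] [AddCommGroup V] [Module k V]
    [AddCommGroup V''] [Module k V'']
    [FiniteDimensional k V'] [FiniteDimensional k V] [FiniteDimensional k V'']
    (F' : RFiltration k V') (F : RFiltration k V) (F'' : RFiltration k V'')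
    (i : V' →ₗ[k] V) (p : V →ₗ[k] V'')
    (hi : Function.Injective i) (hp : Function.Surjective p)
    (hexact : LinearMap.range i = LinearMap.ker p)
    (hker : ∀ x : ℝ, (F'.filt x).map i = F.filt x ⊓ LinearMap.ker p)
    (hsurj : ∀ x : ℝ, (F.filt x).map p = F''.filt x) :
    ∃ s : V'' →ₗ[k] V, p.comp s = LinearMap.id ∧
      (∀ x : ℝ, (F''.filt x).map s ≤ F.filt x) ∧
      (∀ x : ℝ, F.filt x = (F'.filt x).map i ⊔ (F''.filt x).map s) ∧
      (∀ x : ℝ, Disjoint ((F'.filt x).map i) ((F''.filt x).map s)) := by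

  obtain ⟨s, hsec, hfilt⟩ := rfilt_key p hp F.filt F.antitone' (finrank k V'') F''.filt
    F''.antitone' F''.eventually_bot F''.left_cont
    (fun x => le_of_eq (hsurj x).symm)
    (fun x => Submodule.finrank_le _)
  refine ⟨s, hsec, hfilt, fun x => ?_, fun x => ?_⟩
  · apply le_antisymm
    · intro w hw
      have hpw : p w ∈ F''.filt x := (hsurj x) ▸ ⟨w, hw, rfl⟩
      have hsw : s (p w) ∈ (F''.filt x).map s := ⟨p w, hpw, rfl⟩
      have h1 : w - s (p w) ∈ (F'.filt x).map i := by
        rw [hker x]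
        refine ⟨sub_mem hw (hfilt x hsw), ?_⟩
        have h2 := LinearMap.congr_fun hsec (p w)
        simp only [LinearMap.comp_apply, LinearMap.id_apply] at h2
        simp [LinearMap.mem_ker, map_sub, h2]
      have hw' : w = (w - s (p w)) + s (p w) := by abel
      rw [hw']
      exact Submodule.add_mem_sup h1 hsw
    · apply sup_le
      · rw [hker x]; exact inf_le_left
      · exact hfilt x
  · rw [disjoint_def]
    intro u h1 h2
    obtain ⟨w'', hw'', rfl⟩ := h2
    have hk : s w'' ∈ LinearMap.ker p := by
      have := (hker x) ▸ h1
      exact this.2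
    have h3 := LinearMap.congr_fun hsec w''
    simp only [LinearMap.comp_apply, LinearMap.id_apply] at h3
    have : w'' = 0 := by rw [← h3]; exact hk
    rw [this, map_zero]
end

section
/- Let 0 → (V',F') → (V,F) → (V'',F'') → 0 be a short exact sequence of filtered vector spaces over k. Then deg(V,F) = deg(V',F') + deg(V'',F''). -/
open Submodule Module

namespace RFiltration

variable {k V : Type*} [Field k] [AddCommGroup V] [Module k V]

lemma plus_le_filt (F : RFiltration k V) (x : ℝ) : F.plus x ≤ F.filt x :=
  iSup_le fun y => F.antitone' (le_of_lt y.2)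

lemma exists_plus_eq_s2 [FiniteDimensional k V] (F : RFiltration k V) (x : ℝ) :
    ∃ y, x < y ∧ (∀ z, x < z → z ≤ y → F.filt z = F.filt y) ∧ F.plus x = F.filt y := by
  classical
  set S : Set ℕ := {n | ∃ y, x < y ∧ finrank k (F.filt y) = n} with hS
  have hne : S.Nonempty := ⟨_, x + 1, by linarith, rfl⟩
  have hbdd : BddAbove S := ⟨finrank k V, by rintro n ⟨y, -, rfl⟩; exact Submodule.finrank_le _⟩
  obtain ⟨y, hxy, hy⟩ := Nat.sSup_mem hne hbdd
  have key : ∀ z, x < z → z ≤ y → F.filt z = F.filt y := by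
    intro z hxz hzy
    have h1 : F.filt y ≤ F.filt z := F.antitone' hzy
    have h2 : finrank k (F.filt z) ≤ finrank k (F.filt y) := by
      rw [hy]; exact le_csSup hbdd ⟨z, hxz, rfl⟩
    exact (Submodule.eq_of_le_of_finrank_le h1 h2).symm
  refine ⟨y, hxy, key, le_antisymm (iSup_le ?_)
    (le_iSup (fun y : {y : ℝ // x < y} => F.filt y.1) ⟨y, hxy⟩)⟩
  rintro ⟨z, hz⟩
  rcases le_or_gt z y with h | h
  · exact le_of_eq (key z hz h)
  · exact F.antitone' h.le

/-- `grDim x + dim F^{x+} = dim F^x`. -/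
lemma grDim_add_finrank_plus [FiniteDimensional k V] (F : RFiltration k V) (x : ℝ) :
    F.grDim x + finrank k (F.plus x) = finrank k (F.filt x) := by
  have h2 : finrank k ((F.plus x).comap (F.filt x).subtype) = finrank k (F.plus x) :=
    LinearEquiv.finrank_eq (Submodule.comapSubtypeEquivOfLe (F.plus_le_filt x))
  have h1 := Submodule.finrank_quotient_add_finrank ((F.plus x).comap (F.filt x).subtype)
  rw [grDim, h2.symm]
  exact h1

lemma support_grDim_finite [FiniteDimensional k V] (F : RFiltration k V) :
    {x : ℝ | F.grDim x ≠ 0}.Finite := by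
  have hanti : StrictAntiOn (fun x => finrank k (F.filt x)) {x : ℝ | F.grDim x ≠ 0} := by
    intro a ha b hb hab
    have h1 : F.filt b ≤ F.plus a :=
      le_iSup (fun y : {y : ℝ // a < y} => F.filt y.1) ⟨b, hab⟩
    have h2 : finrank k (F.filt b) ≤ finrank k (F.plus a) := Submodule.finrank_mono h1
    have h3 := F.grDim_add_finrank_plus a
    have ha' : F.grDim a ≠ 0 := ha
    simp only []
    omega
  have himg : (fun x => finrank k (F.filt x)) '' {x : ℝ | F.grDim x ≠ 0} ⊆
      Set.Iic (finrank k V) := by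
    rintro n ⟨y, -, rfl⟩; exact Submodule.finrank_le _
  exact Set.Finite.of_finite_image ((Set.finite_Iic _).subset himg) hanti.injOn

end RFiltration

/-- The degree is additive in short exact sequences of filtered
vector spaces. -/
theorem deg_additive_of_filtered_short_exact_sequence
    {k V' V V'' : Type*} [Field k]
    [AddCommGroup V'] [Module k V'] [AddCommGroup V] [Module k V]
    [AddCommGroup V''] [Module k V'']
    [FiniteDimensional k V'] [FiniteDimensional k V] [FiniteDimensional k V'']
    (F' : RFiltration k V') (F : RFiltration k V) (F'' : RFiltration k V'')
    (i : V' →ₗ[k] V) (p : V →ₗ[k] V'')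
    (hi : Function.Injective i) (hp : Function.Surjective p)
    (hexact : LinearMap.range i = LinearMap.ker p)
    (hker : ∀ x : ℝ, (F'.filt x).map i = F.filt x ⊓ LinearMap.ker p)
    (hsurj : ∀ x : ℝ, (F.filt x).map p = F''.filt x) :
    F.deg = F'.deg + F''.deg := by
  classical
  -- Step A: dimensions add at each level
  have dimadd : ∀ x : ℝ,
      finrank k (F.filt x) = finrank k (F'.filt x) + finrank k (F''.filt x) := by
    intro x
    set S := F.filt x
    have hrank := LinearMap.finrank_range_add_finrank_ker (p.domRestrict S)
    have hrange : LinearMap.range (p.domRestrict S) = F''.filt x := by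
      rw [LinearMap.domRestrict, LinearMap.range_comp, Submodule.range_subtype, hsurj]
    have hkerS : LinearMap.ker (p.domRestrict S) = (S ⊓ LinearMap.ker p).comap S.subtype := by
      rw [LinearMap.domRestrict, LinearMap.ker_comp, Submodule.comap_inf,
        Submodule.comap_subtype_self, top_inf_eq]
    have hk1 : finrank k (LinearMap.ker (p.domRestrict S)) =
        finrank k (↥(S ⊓ LinearMap.ker p)) := by
      rw [hkerS]
      exact LinearEquiv.finrank_eq
        (Submodule.comapSubtypeEquivOfLe (inf_le_left : S ⊓ LinearMap.ker p ≤ S))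
    have hk2 : finrank k (↥(S ⊓ LinearMap.ker p)) = finrank k (F'.filt x) := by
      rw [← hker x]
      exact (LinearEquiv.finrank_eq (Submodule.equivMapOfInjective i hi (F'.filt x))).symm
    rw [hrange, hk1, hk2] at hrank
    omega
  -- Step B: dimensions of `plus` add at each level
  have plusadd : ∀ x : ℝ,
      finrank k (F.plus x) = finrank k (F'.plus x) + finrank k (F''.plus x) := by
    intro x
    obtain ⟨y', hy'1, hy'2, hy'3⟩ := F'.exists_plus_eq_s2 x
    obtain ⟨y, hy1, hy2, hy3⟩ := F.exists_plus_eq_s2 x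
    obtain ⟨y'', hy''1, hy''2, hy''3⟩ := F''.exists_plus_eq_s2 x
    set z := min y (min y' y'') with hz
    have hxz : x < z := lt_min hy1 (lt_min hy'1 hy''1)
    have e : F.plus x = F.filt z := by rw [hy3, hy2 z hxz (min_le_left _ _)]
    have e' : F'.plus x = F'.filt z := by
      rw [hy'3, hy'2 z hxz (le_trans (min_le_right _ _) (min_le_left _ _))]
    have e'' : F''.plus x = F''.filt z := by
      rw [hy''3, hy''2 z hxz (le_trans (min_le_right _ _) (min_le_right _ _))]
    rw [e, e', e'']
    exact dimadd z
  -- Step C: grDim adds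
  have gradd : ∀ x : ℝ, F.grDim x = F'.grDim x + F''.grDim x := by
    intro x
    have h1 := F.grDim_add_finrank_plus x
    have h2 := F'.grDim_add_finrank_plus x
    have h3 := F''.grDim_add_finrank_plus x
    have h4 := dimadd x
    have h5 := plusadd x
    omega
  -- Step D: conclude
  have hs' : (Function.support fun x : ℝ => x * (F'.grDim x : ℝ)).Finite := by
    refine F'.support_grDim_finite.subset ?_
    intro x hx
    simp only [Function.mem_support] at hx
    intro h0
    exact hx (by simp [h0])
  have hs'' : (Function.support fun x : ℝ => x * (F''.grDim x : ℝ)).Finite := by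
    refine F''.support_grDim_finite.subset ?_
    intro x hx
    simp only [Function.mem_support] at hx
    intro h0
    exact hx (by simp [h0])
  unfold RFiltration.deg
  rw [← finsum_add_distrib hs' hs'']
  apply finsum_congr
  intro x
  rw [gradd x]
  push_cast
  ring
end

section
/- Fix an integer d ≥ 2 and a weakly decreasing tuple x_1 ≥ … ≥ x_d of real numbers with ∑_{j=1}^d x_j = 0 and x_1 > x_d. Let W^μ = {w ∈ S_d : w(a) < w(a+1) whenever 1 ≤ a ≤ d−1 and x_a = x_{a+1}}. Then for every w ∈ W^μ: #{m ∈ {1,…,d−1} : S_m(w) ≤ 0} ≤ l(w). -/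
open Finset

private lemma aux_swap_lt {d : ℕ} (k0 k1 : Fin d) (hk : (k0 : ℕ) + 1 = (k1 : ℕ))
    (u v : Fin d) (h1 : ¬(u = k0 ∧ v = k1)) (h2 : ¬(u = k1 ∧ v = k0)) :
    Equiv.swap k0 k1 u < Equiv.swap k0 k1 v ↔ u < v := by
  rw [Equiv.swap_apply_def, Equiv.swap_apply_def]
  simp only [Fin.ext_iff, not_and] at h1 h2
  split_ifs <;> simp only [Fin.lt_def, Fin.ext_iff] at * <;> omega

private lemma aux_swap_val {d : ℕ} (k0 k1 : Fin d) (hk : (k0 : ℕ) + 1 = (k1 : ℕ))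
    (m : ℕ) (hm : m ≠ (k1 : ℕ)) (u : Fin d) :
    ((Equiv.swap k0 k1 u : Fin d) : ℕ) < m ↔ (u : ℕ) < m := by
  rw [Equiv.swap_apply_def]
  split_ifs <;> simp_all [Fin.ext_iff] <;> omega

private lemma len_step {d : ℕ} (w : Equiv.Perm (Fin d)) (k0 k1 : Fin d)
    (hk : (k0 : ℕ) + 1 = (k1 : ℕ)) (hlt : w⁻¹ k1 < w⁻¹ k0) :
    (univ.filter fun p : Fin d × Fin d => p.1 < p.2 ∧
        (Equiv.swap k0 k1 * w) p.2 < (Equiv.swap k0 k1 * w) p.1).card + 1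
      = (univ.filter fun p : Fin d × Fin d => p.1 < p.2 ∧ w p.2 < w p.1).card := by
  have hk0k1 : k0 < k1 := by rw [Fin.lt_def]; omega
  have hset : (univ.filter fun p : Fin d × Fin d => p.1 < p.2 ∧ w p.2 < w p.1)
      = insert (w⁻¹ k1, w⁻¹ k0) (univ.filter fun p : Fin d × Fin d => p.1 < p.2 ∧
          (Equiv.swap k0 k1 * w) p.2 < (Equiv.swap k0 k1 * w) p.1) := by
    ext ⟨i, j⟩
    rw [Finset.mem_insert, Finset.mem_filter, Finset.mem_filter]
    simp only [mem_filter, mem_insert, mem_univ, true_and, Equiv.Perm.mul_apply,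
      Prod.mk.injEq]
    constructor
    · rintro ⟨hij, hw⟩
      by_cases hp : i = w⁻¹ k1 ∧ j = w⁻¹ k0
      · exact Or.inl hp
      · refine Or.inr ⟨hij, ?_⟩
        rw [aux_swap_lt k0 k1 hk (w j) (w i) ?_ ?_]
        · exact hw
        · rintro ⟨h1, h2⟩
          exact hp ⟨by rw [Equiv.Perm.eq_inv_iff_eq]; exact h2,
            by rw [Equiv.Perm.eq_inv_iff_eq]; exact h1⟩
        · rintro ⟨h1, h2⟩
          rw [h1, h2] at hw
          exact absurd hw (not_lt.2 hk0k1.le)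
    · rintro (⟨h1, h2⟩ | ⟨hij, hw⟩)
      · subst h1; subst h2
        refine ⟨hlt, ?_⟩
        simp only [Equiv.Perm.coe_inv, Equiv.apply_symm_apply]
        exact hk0k1
      · refine ⟨hij, ?_⟩
        rw [← aux_swap_lt k0 k1 hk (w j) (w i) ?_ ?_]
        · exact hw
        · rintro ⟨h1, h2⟩
          rw [h1, h2, Equiv.swap_apply_left, Equiv.swap_apply_right] at hw
          exact absurd hw (not_lt.2 hk0k1.le)
        · rintro ⟨h1, h2⟩
          have hi : i = w⁻¹ k0 := by rw [Equiv.Perm.eq_inv_iff_eq]; exact h2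
          have hj : j = w⁻¹ k1 := by rw [Equiv.Perm.eq_inv_iff_eq]; exact h1
          rw [hi, hj] at hij
          exact absurd hlt (not_lt.2 hij.le)
  rw [hset, card_insert_of_notMem]
  rw [Finset.mem_filter]
  simp only [mem_filter, mem_univ, true_and, Equiv.Perm.mul_apply,
    Equiv.Perm.coe_inv, Equiv.apply_symm_apply, Equiv.swap_apply_left, Equiv.swap_apply_right, not_and]
  intro _
  exact not_lt.2 hk0k1.le

private lemma pos_partial {d : ℕ} (hd : 1 < d) (x : Fin d → ℝ) (hx : Antitone x)
    (hsum : ∑ j : Fin d, x j = 0)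
    (hne : x ⟨0, by omega⟩ > x ⟨d - 1, by omega⟩)
    (m : ℕ) (hm1 : 1 ≤ m) (hm2 : m ≤ d - 1) :
    0 < ∑ i ∈ univ.filter (fun i : Fin d => (i : ℕ) < m), x i := by
  by_contra hT
  push_neg at hT
  have hm' : m < d := by omega
  have hsplit : ∑ i ∈ univ.filter (fun i : Fin d => (i : ℕ) < m), x i
      + ∑ i ∈ univ.filter (fun i : Fin d => ¬((i : ℕ) < m)), x i = 0 := by
    rw [Finset.sum_filter_add_sum_filter_not]; exact hsum
  have hxm1 : x ⟨m - 1, by omega⟩ ≤ 0 := by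
    by_contra h
    push_neg at h
    have hpos : 0 < ∑ i ∈ univ.filter (fun i : Fin d => (i : ℕ) < m), x i := by
      apply Finset.sum_pos
      · intro i hi
        simp only [mem_filter, mem_univ, true_and] at hi
        have hle : x (⟨m - 1, by omega⟩ : Fin d) ≤ x i := hx (Fin.mk_le_mk.mpr (by omega))
        linarith
      · exact ⟨⟨0, by omega⟩, by simp only [mem_filter, mem_univ, true_and]; omega⟩
    exact absurd hpos (not_lt.2 hT)
  have hBterms : ∀ i ∈ univ.filter (fun i : Fin d => ¬((i : ℕ) < m)), x i ≤ 0 := by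
    intro i hi
    simp only [mem_filter, mem_univ, true_and, not_lt] at hi
    have h1 : x i ≤ x ⟨m - 1, by omega⟩ := hx (Fin.mk_le_mk.mpr (by omega))
    linarith
  have hB0 : ∑ i ∈ univ.filter (fun i : Fin d => ¬((i : ℕ) < m)), x i = 0 := by
    have := Finset.sum_nonpos hBterms
    linarith
  have hall := (Finset.sum_eq_zero_iff_of_nonpos hBterms).1 hB0
  have hxd : x ⟨d - 1, by omega⟩ = 0 := hall ⟨d - 1, by omega⟩ (by simp; omega)
  have hxm0 : x ⟨m, hm'⟩ = 0 := hall ⟨m, hm'⟩ (by simp)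
  have hxm1' : x ⟨m - 1, by omega⟩ = 0 := by
    have h1 : x ⟨m, hm'⟩ ≤ x ⟨m - 1, by omega⟩ := hx (Fin.mk_le_mk.mpr (by omega))
    linarith
  have hAterms : ∀ i ∈ univ.filter (fun i : Fin d => (i : ℕ) < m), 0 ≤ x i := by
    intro i hi
    simp only [mem_filter, mem_univ, true_and] at hi
    have h1 : x ⟨m - 1, by omega⟩ ≤ x i := hx (Fin.mk_le_mk.mpr (by omega))
    linarith
  have hT0 : ∑ i ∈ univ.filter (fun i : Fin d => (i : ℕ) < m), x i = 0 := by
    have := Finset.sum_nonneg hAterms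
    linarith
  have hx0 : x ⟨0, by omega⟩ = 0 :=
    (Finset.sum_eq_zero_iff_of_nonneg hAterms).1 hT0 ⟨0, by omega⟩ (by simp; omega)
  rw [hx0, hxd] at hne
  exact lt_irrefl (0 : ℝ) hne

/-- **Statement 14.** For a weakly decreasing, non-constant tuple `x₁ ≥ … ≥ x_d` summing to
zero and a Kostant representative `w ∈ W^μ`, the number of `m ∈ {1,…,d−1}` with
`S_m(w) = ∑_{j=1}^m x_{w⁻¹(j)} ≤ 0` is at most the length (number of inversions) of `w`. -/
theorem card_nonpos_partial_sums_le_length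
    (d : ℕ) (hd : 2 ≤ d) (x : Fin d → ℝ) (hx : Antitone x)
    (hsum : ∑ j : Fin d, x j = 0)
    (hne : x ⟨0, by omega⟩ > x ⟨d - 1, by omega⟩)
    (Wmu : Set (Equiv.Perm (Fin d)))
    (hWmu : Wmu = {w : Equiv.Perm (Fin d) | ∀ (a : ℕ) (ha : a + 1 < d),
      x ⟨a, by omega⟩ = x ⟨a + 1, ha⟩ →
        ((w ⟨a, by omega⟩ : Fin d) : ℕ) < ((w ⟨a + 1, ha⟩ : Fin d) : ℕ)})
    (S : Equiv.Perm (Fin d) → ℕ → ℝ)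
    (hS : ∀ (w : Equiv.Perm (Fin d)) (m : ℕ),
      S w m = ∑ j ∈ Finset.univ.filter (fun j : Fin d => (j : ℕ) < m), x (w⁻¹ j))
    (len : Equiv.Perm (Fin d) → ℕ)
    (hlen : ∀ w : Equiv.Perm (Fin d), len w =
      (Finset.univ.filter (fun p : Fin d × Fin d => p.1 < p.2 ∧ w p.2 < w p.1)).card) :
    ∀ w ∈ Wmu, ((Finset.Icc 1 (d - 1)).filter (fun m => S w m ≤ 0)).card ≤ len w := by
  subst hWmu
  -- reindexed formula for S
  have hS' : ∀ (w : Equiv.Perm (Fin d)) (m : ℕ),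
      S w m = ∑ i ∈ univ.filter (fun i : Fin d => ((w i : Fin d) : ℕ) < m), x i := by
    intro w m
    rw [hS, Finset.sum_filter, Finset.sum_filter,
      ← Equiv.sum_comp w (fun j : Fin d => if (j : ℕ) < m then x (w⁻¹ j) else 0)]
    refine Finset.sum_congr rfl fun i _ => ?_
    simp
  suffices H : ∀ (n : ℕ) (w : Equiv.Perm (Fin d)), len w = n →
      (∀ (a : ℕ) (ha : a + 1 < d), x ⟨a, by omega⟩ = x ⟨a + 1, ha⟩ →
        ((w ⟨a, by omega⟩ : Fin d) : ℕ) < ((w ⟨a + 1, ha⟩ : Fin d) : ℕ)) →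
      ((Finset.Icc 1 (d - 1)).filter (fun m => S w m ≤ 0)).card ≤ len w by
    intro w hw
    exact H (len w) w rfl hw
  intro n
  induction n using Nat.strong_induction_on with
  | _ n IH =>
    intro w hn hw
    by_cases hdesc : ∃ (k : ℕ) (hk : k + 1 < d),
        w⁻¹ ⟨k + 1, hk⟩ < w⁻¹ ⟨k, by omega⟩
    · obtain ⟨k, hk, hlt⟩ := hdesc
      set k0 : Fin d := ⟨k, by omega⟩ with hk0
      set k1 : Fin d := ⟨k + 1, hk⟩ with hk1
      set w' : Equiv.Perm (Fin d) := Equiv.swap k0 k1 * w with hw'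
      have hkval : (k0 : ℕ) + 1 = (k1 : ℕ) := rfl
      have hlen' : len w' + 1 = len w := by
        rw [hlen, hlen]
        exact len_step w k0 k1 hkval hlt
      -- w' is in Wmu
      have hw'mem : ∀ (a : ℕ) (ha : a + 1 < d), x ⟨a, by omega⟩ = x ⟨a + 1, ha⟩ →
          ((w' ⟨a, by omega⟩ : Fin d) : ℕ) < ((w' ⟨a + 1, ha⟩ : Fin d) : ℕ) := by
        intro a ha hxa
        have h1 := hw a ha hxa
        have h2 : w ⟨a, by omega⟩ < w ⟨a + 1, ha⟩ := by rw [Fin.lt_def]; exact h1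
        have h3 : w' ⟨a, by omega⟩ < w' ⟨a + 1, ha⟩ := by
          simp only [hw', Equiv.Perm.mul_apply]
          rw [aux_swap_lt k0 k1 hkval _ _ ?_ ?_]
          · exact h2
          · rintro ⟨e1, e2⟩
            have hi : (⟨a, by omega⟩ : Fin d) = w⁻¹ k0 := by
              rw [Equiv.Perm.eq_inv_iff_eq]; exact e1
            have hj : (⟨a + 1, ha⟩ : Fin d) = w⁻¹ k1 := by
              rw [Equiv.Perm.eq_inv_iff_eq]; exact e2
            have : w⁻¹ k1 < w⁻¹ k0 := hlt
            rw [← hi, ← hj] at this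
            rw [Fin.lt_def] at this
            simp at this
          · rintro ⟨e1, e2⟩
            rw [e1, e2] at h2
            rw [Fin.lt_def] at h2
            simp [hk0, hk1] at h2
        rw [Fin.lt_def] at h3
        exact h3
      -- S agrees away from k+1
      have hSeq : ∀ m : ℕ, m ≠ k + 1 → S w m = S w' m := by
        intro m hm
        rw [hS', hS']
        refine Finset.sum_congr ?_ (fun _ _ => rfl)
        ext i
        simp only [mem_filter, mem_univ, true_and, hw', Equiv.Perm.mul_apply]
        rw [aux_swap_val k0 k1 hkval m (by simpa [hk1] using hm) (w i)]
      have hsub : (Finset.Icc 1 (d - 1)).filter (fun m => S w m ≤ 0)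
          ⊆ insert (k + 1) ((Finset.Icc 1 (d - 1)).filter (fun m => S w' m ≤ 0)) := by
        intro m hm
        simp only [mem_filter] at hm
        by_cases hmk : m = k + 1
        · subst hmk; exact Finset.mem_insert_self _ _
        · refine Finset.mem_insert_of_mem ?_
          rw [mem_filter]
          exact ⟨hm.1, by rw [← hSeq m hmk]; exact hm.2⟩
      calc ((Finset.Icc 1 (d - 1)).filter (fun m => S w m ≤ 0)).card
          ≤ (insert (k + 1) ((Finset.Icc 1 (d - 1)).filter (fun m => S w' m ≤ 0))).card :=
            Finset.card_le_card hsub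
        _ ≤ ((Finset.Icc 1 (d - 1)).filter (fun m => S w' m ≤ 0)).card + 1 :=
            Finset.card_insert_le _ _
        _ ≤ len w' + 1 := by
            have := IH (len w') (by omega) w' rfl hw'mem
            omega
        _ = len w := hlen'
    · -- no descent : w is the identity
      push_neg at hdesc
      have hcons : ∀ (a b : Fin d), (b : ℕ) = (a : ℕ) + 1 → w⁻¹ a < w⁻¹ b := by
        intro a b hab
        have hk' : (a : ℕ) + 1 < d := by omega
        have h := hdesc (a : ℕ) hk'
        have e1 : (⟨(a : ℕ), by omega⟩ : Fin d) = a := by apply Fin.ext; rfl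
        have e2 : (⟨(a : ℕ) + 1, hk'⟩ : Fin d) = b := by apply Fin.ext; simp; omega
        rw [e1, e2] at h
        refine lt_of_le_of_ne h ?_
        intro hcon
        have := w⁻¹.injective hcon
        rw [this] at hab
        omega
      have step : ∀ (t : ℕ) (a b : Fin d), (b : ℕ) = (a : ℕ) + t + 1 → w⁻¹ a < w⁻¹ b := by
        intro t
        induction t with
        | zero => intro a b hab; exact hcons a b (by omega)
        | succ t ih =>
          intro a b hab
          have hmid : (a : ℕ) + t + 1 < d := by omega
          exact lt_trans (ih a ⟨(a : ℕ) + t + 1, hmid⟩ (by simp))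
            (hcons ⟨(a : ℕ) + t + 1, hmid⟩ b (by simp; omega))
      have hsm : StrictMono (⇑(w⁻¹) : Fin d → Fin d) := by
        intro a b hab
        rw [Fin.lt_def] at hab
        exact step ((b : ℕ) - (a : ℕ) - 1) a b (by omega)
      have hfe : (⇑(w⁻¹) : Fin d → Fin d) = id := by
        have hwf : WellFoundedLT (Fin d) := inferInstance
        refine (StrictMono.range_inj (f := (⇑(w⁻¹) : Fin d → Fin d))
          (g := (id : Fin d → Fin d)) hsm strictMono_id).1 ?_
        rw [Equiv.range_eq_univ, Set.range_id]
      have hfix : ∀ j : Fin d, w⁻¹ j = j := fun j => congrFun hfe j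
      have hpos : ∀ m ∈ Finset.Icc 1 (d - 1), ¬ (S w m ≤ 0) := by
        intro m hm
        rw [Finset.mem_Icc] at hm
        rw [hS]
        have h1 : ∑ j ∈ univ.filter (fun j : Fin d => (j : ℕ) < m), x (w⁻¹ j)
            = ∑ j ∈ univ.filter (fun j : Fin d => (j : ℕ) < m), x j :=
          Finset.sum_congr rfl fun j _ => by rw [hfix]
        rw [h1]
        exact not_le.2 (pos_partial hd x hx hsum hne m hm.1 hm.2)
      have : (Finset.Icc 1 (d - 1)).filter (fun m => S w m ≤ 0) = ∅ :=
        Finset.filter_eq_empty_iff.2 hpos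
      rw [this]
      simp
end
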